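/- Let f : ℝ⁴ → ℝ be a smooth, everywhere positive function of (x, y, s, t), and set w = 2 log f, v = w_x, u = v_x, p = u_x, q = p_x. If (D_x D_t + (1/6)·D_s D_x³ − (1/3)·D_y D_s) f·f = 0, then v_t + (1/6)(p_s + 3 u v_s) − (1/3) w_{ys} = 0, and (by differentiation in x) u_t + (1/6)(q_s + 3 p v_s + 3 u u_s) − (1/3) v_{ys} = 0. -/

import Mathlib

noncomputable section

/-- Partial derivative in the first variable `x` of a function on `ℝ⁴`. -/
def pX (f : ℝ × ℝ × ℝ × ℝ → ℝ) : ℝ × ℝ × ℝ × ℝ → ℝ :=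
  fun p => deriv (fun x => f (x, p.2)) p.1

/-- Partial derivative in the second variable `y` (playing the role of `t₃`). -/
def pY (f : ℝ × ℝ × ℝ × ℝ → ℝ) : ℝ × ℝ × ℝ × ℝ → ℝ :=
  fun p => deriv (fun y => f (p.1, y, p.2.2)) p.2.1

/-- Partial derivative in the third variable `s` (playing the role of `t_{2m−1}`). -/
def pS (f : ℝ × ℝ × ℝ × ℝ → ℝ) : ℝ × ℝ × ℝ × ℝ → ℝ :=
  fun p => deriv (fun s => f (p.1, p.2.1, s, p.2.2.2)) p.2.2.1

/-- Partial derivative in the fourth variable `t` (playing the role of `t_{2m+1}`). -/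
def pT (f : ℝ × ℝ × ℝ × ℝ → ℝ) : ℝ × ℝ × ℝ × ℝ → ℝ :=
  fun p => deriv (fun t => f (p.1, p.2.1, p.2.2.1, t)) p.2.2.2

/-- `D_x D_t f·f = 2(f_{xt} f − f_x f_t)`. -/
def HDxDt (f : ℝ × ℝ × ℝ × ℝ → ℝ) : ℝ × ℝ × ℝ × ℝ → ℝ :=
  fun p => 2 * (pX (pT f) p * f p - pX f p * pT f p)

/-- `D_y D_s f·f = 2(f_{ys} f − f_y f_s)`. -/
def HDyDs (f : ℝ × ℝ × ℝ × ℝ → ℝ) : ℝ × ℝ × ℝ × ℝ → ℝ :=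
  fun p => 2 * (pY (pS f) p * f p - pY f p * pS f p)

/-- `D_s D_x³ f·f = 2(f_{xxxs} f − f_{xxx} f_s − 3 f_{xxs} f_x + 3 f_{xx} f_{xs})`. -/
def HDsDx3 (f : ℝ × ℝ × ℝ × ℝ → ℝ) : ℝ × ℝ × ℝ × ℝ → ℝ :=
  fun p => 2 * (pX (pX (pX (pS f))) p * f p - pX (pX (pX f)) p * pS f p
      - 3 * pX (pX (pS f)) p * pX f p + 3 * pX (pX f) p * pX (pS f) p)

/-! ### Auxiliary directional-derivative machinery -/

abbrev E4 := ℝ × ℝ × ℝ × ℝ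

def DD (e : E4) (g : E4 → ℝ) : E4 → ℝ := fun p => fderiv ℝ g p e

def eX : E4 := (1,0,0,0)
def eY : E4 := (0,1,0,0)
def eS : E4 := (0,0,1,0)
def eT : E4 := (0,0,0,1)

theorem pX_eq {g : E4 → ℝ} (hg : Differentiable ℝ g) : pX g = DD eX g := by
  funext p
  have hc : HasDerivAt (fun x : ℝ => ((x, p.2) : E4)) (((1:ℝ), (0 : ℝ×ℝ×ℝ)) : E4) p.1 :=
    (hasDerivAt_id p.1).prodMk (hasDerivAt_const p.1 p.2)
  exact ((hg p).hasFDerivAt.comp_hasDerivAt p.1 hc).deriv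

theorem pY_eq {g : E4 → ℝ} (hg : Differentiable ℝ g) : pY g = DD eY g := by
  funext p
  have hc : HasDerivAt (fun y : ℝ => ((p.1, y, p.2.2) : E4)) (((0:ℝ), (1:ℝ), (0:ℝ×ℝ)) : E4) p.2.1 :=
    (hasDerivAt_const _ p.1).prodMk ((hasDerivAt_id _).prodMk (hasDerivAt_const _ p.2.2))
  exact ((hg p).hasFDerivAt.comp_hasDerivAt p.2.1 hc).deriv

theorem pS_eq {g : E4 → ℝ} (hg : Differentiable ℝ g) : pS g = DD eS g := by
  funext p
  have hc : HasDerivAt (fun s : ℝ => ((p.1, p.2.1, s, p.2.2.2) : E4))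
      (((0:ℝ), (0:ℝ), (1:ℝ), (0:ℝ)) : E4) p.2.2.1 :=
    (hasDerivAt_const _ p.1).prodMk ((hasDerivAt_const _ p.2.1).prodMk
      ((hasDerivAt_id _).prodMk (hasDerivAt_const _ p.2.2.2)))
  exact ((hg p).hasFDerivAt.comp_hasDerivAt p.2.2.1 hc).deriv

theorem pT_eq {g : E4 → ℝ} (hg : Differentiable ℝ g) : pT g = DD eT g := by
  funext p
  have hc : HasDerivAt (fun t : ℝ => ((p.1, p.2.1, p.2.2.1, t) : E4))
      (((0:ℝ), (0:ℝ), (0:ℝ), (1:ℝ)) : E4) p.2.2.2 :=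
    (hasDerivAt_const _ p.1).prodMk ((hasDerivAt_const _ p.2.1).prodMk
      ((hasDerivAt_const _ p.2.2.1).prodMk (hasDerivAt_id _)))
  exact ((hg p).hasFDerivAt.comp_hasDerivAt p.2.2.2 hc).deriv

theorem DD_smooth (e : E4) {g : E4 → ℝ} (hg : ContDiff ℝ (⊤ : ℕ∞) g) : ContDiff ℝ (⊤ : ℕ∞) (DD e g) :=
  (hg.fderiv_right (by simp)).clm_apply contDiff_const

theorem DD_comm {g : E4 → ℝ} (hg : ContDiff ℝ (⊤ : ℕ∞) g) (e1 e2 : E4) :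
    DD e1 (DD e2 g) = DD e2 (DD e1 g) := by
  funext p
  have hsymm : IsSymmSndFDerivAt ℝ g p := by
    apply (hg.contDiffAt).isSymmSndFDerivAt
    rw [minSmoothness_of_isRCLikeNormedField]; exact WithTop.coe_le_coe.mpr (le_top (a := (2:ℕ∞)))
  have hd : DifferentiableAt ℝ (fderiv ℝ g) p :=
    ((hg.fderiv_right (m := 1) (by exact WithTop.coe_le_coe.mpr le_top)).differentiable one_ne_zero) p
  have h1 : ∀ e e' : E4, fderiv ℝ (DD e g) p e' = fderiv ℝ (fderiv ℝ g) p e' e := by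
    intro e e'
    rw [show DD e g = fun q => (fderiv ℝ g q) e from rfl,
      fderiv_clm_apply hd (differentiableAt_const e)]
    simp
  show fderiv ℝ (DD e2 g) p e1 = fderiv ℝ (DD e1 g) p e2
  rw [h1 e2 e1, h1 e1 e2]
  exact hsymm e1 e2

theorem DD_const_mul {g : E4 → ℝ} {p : E4} (e : E4) (c : ℝ) (hg : DifferentiableAt ℝ g p) :
    DD e (fun q => c * g q) p = c * DD e g p := by
  show fderiv ℝ (fun q => c * g q) p e = _
  rw [fderiv_const_mul hg c]
  simp [DD]

theorem DD_mul {g h : E4 → ℝ} {p : E4} (e : E4) (hg : DifferentiableAt ℝ g p)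
    (hh : DifferentiableAt ℝ h p) :
    DD e (fun q => g q * h q) p = DD e g p * h p + g p * DD e h p := by
  show fderiv ℝ (fun q => g q * h q) p e = _
  rw [fderiv_fun_mul hg hh]
  simp [DD]
  ring

theorem DD_add {g h : E4 → ℝ} {p : E4} (e : E4) (hg : DifferentiableAt ℝ g p)
    (hh : DifferentiableAt ℝ h p) :
    DD e (fun q => g q + h q) p = DD e g p + DD e h p := by
  show fderiv ℝ (fun q => g q + h q) p e = _
  rw [fderiv_fun_add hg hh]; simp [DD]

theorem DD_sub {g h : E4 → ℝ} {p : E4} (e : E4) (hg : DifferentiableAt ℝ g p)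
    (hh : DifferentiableAt ℝ h p) :
    DD e (fun q => g q - h q) p = DD e g p - DD e h p := by
  show fderiv ℝ (fun q => g q - h q) p e = _
  rw [fderiv_fun_sub hg hh]; simp [DD]

theorem DD_log {g : E4 → ℝ} {p : E4} (e : E4) (hg : DifferentiableAt ℝ g p)
    (hne : g p ≠ 0) :
    DD e (fun q => Real.log (g q)) p = (g p)⁻¹ * DD e g p := by
  have h := (hg.hasFDerivAt.log hne).fderiv
  show fderiv ℝ (fun q => Real.log (g q)) p e = _
  rw [h]; simp [DD]

theorem stmt_15
    (f : ℝ × ℝ × ℝ × ℝ → ℝ) (hf : ContDiff ℝ (⊤ : ℕ∞) f) (hfpos : ∀ p, 0 < f p)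
    (w v u P Q : ℝ × ℝ × ℝ × ℝ → ℝ)
    (hw : w = fun p => 2 * Real.log (f p))
    (hv : v = pX w) (hu : u = pX v) (hP : P = pX u) (hQ : Q = pX P)
    (hbil : ∀ p, HDxDt f p + (1 / 6) * HDsDx3 f p - (1 / 3) * HDyDs f p = 0) :
    (∀ p, pT v p + (1 / 6) * (pS P p + 3 * u p * pS v p) - (1 / 3) * pY (pS w) p = 0) ∧
    (∀ p, pT u p + (1 / 6) * (pS Q p + 3 * P p * pS v p + 3 * u p * pS u p)
        - (1 / 3) * pY (pS v) p = 0) := by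
  have hne : ∀ q, f q ≠ 0 := fun q => (hfpos q).ne'
  have hfd : Differentiable ℝ f := hf.differentiable (by simp)
  have hwS : ContDiff ℝ (⊤ : ℕ∞) w := by
    rw [hw]; exact contDiff_const.mul (hf.log hne)
  have hv' : v = DD eX w := by rw [hv, pX_eq (hwS.differentiable (by simp))]
  have hvS : ContDiff ℝ (⊤ : ℕ∞) v := by rw [hv']; exact DD_smooth eX hwS
  have hu' : u = DD eX v := by rw [hu, pX_eq (hvS.differentiable (by simp))]
  have huS : ContDiff ℝ (⊤ : ℕ∞) u := by rw [hu']; exact DD_smooth eX hvS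
  have hP' : P = DD eX u := by rw [hP, pX_eq (huS.differentiable (by simp))]
  have hPS : ContDiff ℝ (⊤ : ℕ∞) P := by rw [hP']; exact DD_smooth eX huS
  have hQ' : Q = DD eX P := by rw [hQ, pX_eq (hPS.differentiable (by simp))]
  have hQS : ContDiff ℝ (⊤ : ℕ∞) Q := by rw [hQ']; exact DD_smooth eX hPS
  -- smoothness of iterated derivatives of f
  have hfX : ContDiff ℝ (⊤ : ℕ∞) (DD eX f) := DD_smooth eX hf
  have hfXX : ContDiff ℝ (⊤ : ℕ∞) (DD eX (DD eX f)) := DD_smooth eX hfX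
  have hfXXX : ContDiff ℝ (⊤ : ℕ∞) (DD eX (DD eX (DD eX f))) := DD_smooth eX hfXX
  have hfS : ContDiff ℝ (⊤ : ℕ∞) (DD eS f) := DD_smooth eS hf
  have hfT : ContDiff ℝ (⊤ : ℕ∞) (DD eT f) := DD_smooth eT hf
  have dd : ∀ {g : E4 → ℝ}, ContDiff ℝ (⊤ : ℕ∞) g → ∀ q, DifferentiableAt ℝ g q :=
    fun hg q => hg.differentiable (by simp) q
  -- basic log-derivative relation, multiplied out
  have Ew : ∀ e : E4, (fun q => f q * DD e w q) = fun q => 2 * DD e f q := by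
    intro e; funext q
    rw [hw, DD_const_mul e 2 (dd (hf.log hne) q), DD_log e (dd hf q) (hne q)]
    field_simp [hne q]
  have E1 : (fun q => f q * v q) = fun q => 2 * DD eX f q := by
    rw [hv']; exact Ew eX
  have E1d : ∀ (e : E4) (q : E4),
      DD e f q * v q + f q * DD e v q = 2 * DD e (DD eX f) q := by
    intro e q
    have h := congrFun (congrArg (DD e) E1) q
    rwa [DD_mul e (dd hf q) (dd hvS q), DD_const_mul e 2 (dd hfX q)] at h
  have E2 : (fun q => DD eX f q * v q + f q * u q) = fun q => 2 * DD eX (DD eX f) q := by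
    funext q
    have h := E1d eX q
    rwa [← hu'] at h
  have E2d : ∀ (e : E4) (q : E4),
      (DD e (DD eX f) q * v q + DD eX f q * DD e v q) + (DD e f q * u q + f q * DD e u q)
        = 2 * DD e (DD eX (DD eX f)) q := by
    intro e q
    have h := congrFun (congrArg (DD e) E2) q
    rwa [DD_add e ((dd hfX q).fun_mul (dd hvS q)) ((dd hf q).fun_mul (dd huS q)),
      DD_mul e (dd hfX q) (dd hvS q), DD_mul e (dd hf q) (dd huS q),
      DD_const_mul e 2 (dd hfXX q)] at h
  have E3 : (fun q => (DD eX (DD eX f) q * v q + DD eX f q * u q)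
      + (DD eX f q * u q + f q * P q)) = fun q => 2 * DD eX (DD eX (DD eX f)) q := by
    funext q
    have h := E2d eX q
    rwa [← hu', ← hP'] at h
  have E3d : ∀ (e : E4) (q : E4),
      ((DD e (DD eX (DD eX f)) q * v q + DD eX (DD eX f) q * DD e v q)
        + (DD e (DD eX f) q * u q + DD eX f q * DD e u q))
      + ((DD e (DD eX f) q * u q + DD eX f q * DD e u q)
        + (DD e f q * P q + f q * DD e P q))
        = 2 * DD e (DD eX (DD eX (DD eX f))) q := by
    intro e q
    have h := congrFun (congrArg (DD e) E3) q
    rwa [DD_add e (((dd hfXX q).fun_mul (dd hvS q)).fun_add ((dd hfX q).fun_mul (dd huS q)))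
        (((dd hfX q).fun_mul (dd huS q)).fun_add ((dd hf q).fun_mul (dd hPS q))),
      DD_add e ((dd hfXX q).fun_mul (dd hvS q)) ((dd hfX q).fun_mul (dd huS q)),
      DD_add e ((dd hfX q).fun_mul (dd huS q)) ((dd hf q).fun_mul (dd hPS q)),
      DD_mul e (dd hfXX q) (dd hvS q), DD_mul e (dd hfX q) (dd huS q),
      DD_mul e (dd hf q) (dd hPS q),
      DD_const_mul e 2 (dd hfXXX q)] at h
  -- s-derivative of w relation, and its y-derivative
  have Es : (fun q => f q * DD eS w q) = fun q => 2 * DD eS f q := Ew eS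
  have Esq : ∀ q, f q * DD eS w q = 2 * DD eS f q := congrFun Es
  have Esd : ∀ q, DD eY f q * DD eS w q + f q * DD eY (DD eS w) q
      = 2 * DD eY (DD eS f) q := by
    intro q
    have h := congrFun (congrArg (DD eY) Es) q
    rwa [DD_mul eY (dd hf q) (dd (DD_smooth eS hwS) q), DD_const_mul eY 2 (dd hfS q)] at h
  -- the key pointwise identity in DD form
  have key1 : ∀ p, DD eT v p + (1 / 6) * (DD eS P p + 3 * u p * DD eS v p)
      - (1 / 3) * DD eY (DD eS w) p = 0 := by
    intro p
    have Fne := hne p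
    have h1 := congrFun E1 p
    have h2 := congrFun E2 p
    have h3 := congrFun E3 p
    have hS1 := E1d eS p
    have hS2 := E2d eS p
    have hS3 := E3d eS p
    have hT1 := E1d eT p
    have hws := Esq p
    have hwys := Esd p
    have hb := hbil p
    simp only [HDxDt, HDyDs, HDsDx3] at hb
    rw [pT_eq hfd, pS_eq hfd] at hb
    rw [pY_eq (hfS.differentiable (by simp))] at hb
    rw [pY_eq hfd] at hb
    rw [pX_eq hfd] at hb
    rw [pX_eq (hfT.differentiable (by simp))] at hb
    rw [pX_eq (hfS.differentiable (by simp))] at hb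
    rw [DD_comm hf eX eT, DD_comm hf eX eS] at hb
    rw [pX_eq (hfX.differentiable (by simp))] at hb
    rw [pX_eq ((DD_smooth eS hfX).differentiable (by simp))] at hb
    rw [DD_comm hfX eX eS] at hb
    rw [pX_eq (hfXX.differentiable (by simp))] at hb
    rw [pX_eq ((DD_smooth eS hfXX).differentiable (by simp))] at hb
    rw [DD_comm hfXX eX eS] at hb
    have hkey : f p ^ 4 * (DD eT v p + (1 / 6) * (DD eS P p + 3 * u p * DD eS v p)
        - (1 / 3) * DD eY (DD eS w) p) = 0 := by
      linear_combination (f p ^ 3) * hT1 + (1/6) * (f p ^ 3) * hS3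
        - (1/3) * (f p ^ 3) * hwys
        + (1/3) * (f p ^ 2 * DD eY f p) * hws
        - (1/3) * (f p ^ 2 * DD eX f p) * hS2
        - (1/6) * (f p ^ 2 * DD eS f p) * h3
        + ((1/3) * (f p * DD eX f p ^ 2) - (1/6) * (f p ^ 2 * DD eX (DD eX f) p)
            + (1/2) * (f p ^ 3 * u p)) * hS1
        + ((2/3) * (f p * DD eX f p * DD eS f p) + (2/3) * (f p ^ 2 * DD eS (DD eX f) p)
            - (1/2) * (f p ^ 2 * DD eS f p * v p)) * h2
        + (-(2/3) * (f p * DD eX (DD eX f) p * DD eS f p)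
            - (1/3) * (f p * DD eX f p * DD eS (DD eX f) p)
            + (1/2) * (f p * DD eX f p * DD eS f p * v p)
            - (f p ^ 2 * DD eT f p)
            - (1/6) * (f p ^ 2 * DD eS (DD eX (DD eX f)) p)) * h1
        + (f p ^ 2) * hb
    exact (mul_eq_zero.mp hkey).resolve_left (pow_ne_zero 4 Fne)
  refine ⟨?_, ?_⟩
  · intro p
    rw [pT_eq (hvS.differentiable (by simp)), pS_eq (hPS.differentiable (by simp)),
      pS_eq (hvS.differentiable (by simp)), pS_eq (hwS.differentiable (by simp)),
      pY_eq ((DD_smooth eS hwS).differentiable (by simp))]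
    exact key1 p
  · intro p
    have hG : (fun q => DD eT v q + (1 / 6) * (DD eS P q + 3 * u q * DD eS v q)
        - (1 / 3) * DD eY (DD eS w) q) = fun _ => (0:ℝ) := funext key1
    have hDG : DD eX (fun q => DD eT v q + (1 / 6) * (DD eS P q + 3 * u q * DD eS v q)
        - (1 / 3) * DD eY (DD eS w) q) p = 0 := by
      rw [hG]
      show fderiv ℝ (fun _ => (0:ℝ)) p eX = 0
      rw [fderiv_fun_const]
      simp
    have dTv := (DD_smooth eT hvS).differentiable (by simp)
    have dSP := (DD_smooth eS hPS).differentiable (by simp)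
    have du := huS.differentiable (by simp)
    have dSv := (DD_smooth eS hvS).differentiable (by simp)
    have dYSw := (DD_smooth eY (DD_smooth eS hwS)).differentiable (by simp)
    rw [DD_sub eX ((dTv p).fun_add ((((dSP p).fun_add
          ((((du p).const_mul 3).fun_mul (dSv p))))).const_mul (1/6)))
        ((dYSw p).const_mul (1/3)),
      DD_const_mul eX (1/3) (dYSw p),
      DD_add eX (dTv p) (((dSP p).fun_add ((((du p).const_mul 3).fun_mul (dSv p)))).const_mul (1/6)),
      DD_const_mul eX (1/6) ((dSP p).fun_add ((((du p).const_mul 3).fun_mul (dSv p)))),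
      DD_add eX (dSP p) ((((du p).const_mul 3).fun_mul (dSv p))),
      DD_mul eX ((du p).const_mul 3) (dSv p),
      DD_const_mul eX 3 (du p),
      DD_comm hvS eX eT, DD_comm hPS eX eS, DD_comm hvS eX eS,
      DD_comm (DD_smooth eS hwS) eX eY, DD_comm hwS eX eS,
      ← hu', ← hQ', ← hP', ← hv'] at hDG
    rw [pT_eq (huS.differentiable (by simp)), pS_eq (hQS.differentiable (by simp)),
      pS_eq (hvS.differentiable (by simp)), pS_eq (huS.differentiable (by simp)),
      pY_eq ((DD_smooth eS hvS).differentiable (by simp))]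
    linear_combination hDG
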